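/- Let Φ : ℝ → (-∞, +∞] be a proper convex function with Φ(y) = +∞ for y ∉ (a,b), and suppose Φ is differentiable on (a,b) with Φ'(x) → -∞ as x → a⁺ and Φ'(x) → +∞ as x → b⁻. Fix m ∈ (a+ε, b-ε) for some ε > 0. Then there exist constants C_ε > 0 and C̃_ε ≥ 0 such that for all φ ∈ (a,b), Φ'(φ)(φ - m) ≥ C_ε |Φ'(φ)| - C̃_ε. -/

import Mathlib

/-!
Only the monotonicity of `Φ'` matters. Put `M := max |Φ'(m - ε)| |Φ'(m + ε)|`. Far to the right of `m`
(`φ ≥ m + ε`) the derivative is `≥ -M`, so either `Φ'(φ) ≥ 0` and `Φ'(φ)(φ - m) ≥ ε |Φ'(φ)|`, or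
`|Φ'(φ)| ≤ M`; symmetrically on the left, and `|Φ'(φ)| ≤ M` near `m`. Where `|Φ'(φ)| ≤ M`, the
boundedness of `(a, b)` bounds the product from below by a constant.
-/

open Set

theorem sub_le_mul_of_abs_le {ψ t δ M R : ℝ} (hδ : 0 ≤ δ) (hM : 0 ≤ M) (ht : |t| ≤ R)
    (hlow : -δ ≤ t → -M ≤ ψ) (hup : t ≤ δ → ψ ≤ M) :
    δ * |ψ| - M * (δ + R) ≤ ψ * t := by
  obtain ⟨htl, htu⟩ := abs_le.mp ht
  have hMR : 0 ≤ M * (δ + R) := mul_nonneg hM (by linarith [abs_nonneg t])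
  rcases le_total 0 ψ with hψ | hψ
  · rw [abs_of_nonneg hψ]
    rcases le_total δ t with hδt | htδ
    · nlinarith
    · nlinarith [hup htδ]
  · rw [abs_of_nonpos hψ]
    rcases le_total t (-δ) with htδ | hδt
    · nlinarith
    · nlinarith [hlow hδt]

theorem MonotoneOn.sub_le_mul_sub {s : Set ℝ} {g : ℝ → ℝ} {m δ R : ℝ} (hg : MonotoneOn g s)
    (hδ : 0 ≤ δ) (hl : m - δ ∈ s) (hr : m + δ ∈ s) {φ : ℝ} (hφ : φ ∈ s) (hR : |φ - m| ≤ R) :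
    δ * |g φ| - max |g (m - δ)| |g (m + δ)| * (δ + R) ≤ g φ * (φ - m) := by
  refine sub_le_mul_of_abs_le hδ ((abs_nonneg _).trans (le_max_left _ _)) hR
    (fun h ↦ ?_) (fun h ↦ ?_)
  · calc -max |g (m - δ)| |g (m + δ)| ≤ -|g (m - δ)| := neg_le_neg (le_max_left _ _)
      _ ≤ g (m - δ) := neg_abs_le _
      _ ≤ g φ := hg hl hφ (by linarith)
  · calc g φ ≤ g (m + δ) := hg hφ hr (by linarith)
      _ ≤ |g (m + δ)| := le_abs_self _
      _ ≤ max |g (m - δ)| |g (m + δ)| := le_max_right _ _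

theorem singular_potential_coercivity_general (a b ε m : ℝ) (hε : 0 < ε)
    (hm : m ∈ Set.Ioo (a + ε) (b - ε)) (Φ Φ' : ℝ → ℝ)
    (hconv : ConvexOn ℝ (Set.Ioo a b) Φ)
    (hderiv : ∀ x ∈ Set.Ioo a b, HasDerivAt Φ (Φ' x) x) :
    ∃ C C' : ℝ, 0 < C ∧ 0 ≤ C' ∧
      ∀ φ ∈ Set.Ioo a b, C * |Φ' φ| - C' ≤ Φ' φ * (φ - m) := by
  obtain ⟨hma, hmb⟩ := hm
  have hmono : MonotoneOn Φ' (Ioo a b) :=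
    (hconv.monotoneOn_deriv fun x hx ↦ (hderiv x hx).differentiableAt).congr
      fun x hx ↦ (hderiv x hx).deriv
  have hM : 0 ≤ max |Φ' (m - ε)| |Φ' (m + ε)| := (abs_nonneg _).trans (le_max_left _ _)
  refine ⟨ε, max |Φ' (m - ε)| |Φ' (m + ε)| * (ε + (b - a)), hε,
    mul_nonneg hM (by linarith), fun φ hφ ↦ ?_⟩
  exact hmono.sub_le_mul_sub hε.le ⟨by linarith, by linarith⟩ ⟨by linarith, by linarith⟩ hφ
    (abs_sub_le_iff.mpr ⟨by linarith [hφ.2], by linarith [hφ.1]⟩)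

theorem singular_potential_coercivity (a b ε m : ℝ) (hε : 0 < ε)
    (hm : m ∈ Set.Ioo (a + ε) (b - ε)) (Φ Φ' : ℝ → ℝ)
    (hconv : ConvexOn ℝ (Set.Ioo a b) Φ)
    (hderiv : ∀ x ∈ Set.Ioo a b, HasDerivAt Φ (Φ' x) x)
    (ha : Filter.Tendsto Φ' (nhdsWithin a (Set.Ioi a)) Filter.atBot)
    (hb : Filter.Tendsto Φ' (nhdsWithin b (Set.Iio b)) Filter.atTop) :
    ∃ C C' : ℝ, 0 < C ∧ 0 ≤ C' ∧
      ∀ φ ∈ Set.Ioo a b, C * |Φ' φ| - C' ≤ Φ' φ * (φ - m) :=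
  singular_potential_coercivity_general a b ε m hε hm Φ Φ' hconv hderiv
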